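/- arXiv:math/9804121 — 5 statements merged into one kernel-verified Lean document; each statement's English description precedes it below -/
import Mathlib

section
/- Let (F,G) be a WZ pair: F(n+1,k) - F(n,k) = G(n,k+1) - G(n,k) for all n,k ≥ 0. Suppose the series Σ_{n=0}^∞ G(n,0) and Σ_{n=1}^∞ (F(n,n-1) + G(n-1,n-1)) converge, and the limit L = lim_{n→∞} Σ_{k=0}^{n-1} F(n,k) exists. Then Σ_{n=0}^∞ G(n,0) = Σ_{n=1}^∞ (F(n,n-1) + G(n-1,n-1)) - L. -/
/-!
Summing the WZ relation `F (n+1) k - F n k = G n (k+1) - G n k` along row `n` for `k < n`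
telescopes in `k`, so the row sums `∑_{k<n} F n k` grow by `F (n+1) n + G n n - G n 0` from `n`
to `n+1`. Summing this over `n < N`, i.e. over the staircase `{(n, k) | k < n < N}`, expresses the
`N`-th partial sum of `∑ G n 0` as the `N`-th partial sum of `∑ (F (n+1) n + G n n)` minus
`∑_{k<N} F N k`; letting `N → ∞` gives the theorem.
-/

open Finset Filter Topology

def IsWZPair {M : Type*} [AddCommGroup M] (F G : ℕ → ℕ → M) : Prop :=
  ∀ n k, F (n + 1) k - F n k = G n (k + 1) - G n k

namespace IsWZPair

variable {M : Type*} [AddCommGroup M] {F G : ℕ → ℕ → M}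

theorem sum_range_succ_row (h : IsWZPair F G) (N : ℕ) :
    ∑ k ∈ range (N + 1), F (N + 1) k =
      ∑ k ∈ range N, F N k + F (N + 1) N + (G N N - G N 0) := by
  have row_diff : ∑ k ∈ range N, (F (N + 1) k - F N k) = G N N - G N 0 := by
    simp_rw [h N]
    exact sum_range_sub (G N) N
  rw [sum_range_succ, ← row_diff, sum_sub_distrib]
  abel

theorem sum_range_eq_sum_range_diag_sub_row (h : IsWZPair F G) (N : ℕ) :
    ∑ n ∈ range N, G n 0 =
      ∑ n ∈ range N, (F (n + 1) n + G n n) - ∑ k ∈ range N, F N k := by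
  induction N with
  | zero => simp
  | succ N ih =>
    rw [sum_range_succ, sum_range_succ, ih, h.sum_range_succ_row]
    abel

theorem tendsto_sum_range [TopologicalSpace M] [IsTopologicalAddGroup M]
    (h : IsWZPair F G) {S L : M} (hS : HasSum (fun n ↦ F (n + 1) n + G n n) S)
    (hL : Tendsto (fun N ↦ ∑ k ∈ range N, F N k) atTop (𝓝 L)) :
    Tendsto (fun N ↦ ∑ n ∈ range N, G n 0) atTop (𝓝 (S - L)) :=
  (hS.tendsto_sum_nat.sub hL).congr fun N ↦ (h.sum_range_eq_sum_range_diag_sub_row N).symm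

end IsWZPair

theorem wz_acceleration (F G : ℕ → ℕ → ℝ)
    (hWZ : ∀ n k, F (n + 1) k - F n k = G n (k + 1) - G n k)
    (S₁ S₂ L : ℝ)
    (h₁ : HasSum (fun n : ℕ => G n 0) S₁)
    (h₂ : HasSum (fun n : ℕ => F (n + 1) n + G n n) S₂)
    (hL : Filter.Tendsto (fun n : ℕ => ∑ k ∈ Finset.range n, F n k)
      Filter.atTop (nhds L)) :
    S₁ = S₂ - L :=
  tendsto_nhds_unique h₁.tendsto_sum_nat (IsWZPair.tendsto_sum_range hWZ h₂ hL)
end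

section
/- Let (F,G) be a WZ pair: F(n+1,k) - F(n,k) = G(n,k+1) - G(n,k) for all n,k ≥ 0, and let s ≥ 1 be an integer. Suppose all relevant series and limits converge. Then Σ_{n=0}^∞ G(n,0) = Σ_{n=0}^∞ [ F(s(n+1), n) + Σ_{i=0}^{s-1} G(sn+i, n) ] − lim_{n→∞} Σ_{k=0}^{n-1} F(sn, k). -/
/-!
Summing the WZ relation over `k < n` telescopes to
`∑_{k<n} F(n+1,k) - ∑_{k<n} F(n,k) = G(n,n) - G(n,0)`, and summing that over `n < N` gives
`∑_{n<N} (F(n+1,n) + G(n,n)) = ∑_{n<N} G(n,0) + ∑_{k<N} F(N,k)`;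
letting `N → ∞` yields the acceleration formula. For general `s`, the same formula is applied
to `(F(sn,k), ∑_{i<s} G(sn+i,k))`, which is again a WZ pair, and whose series
`∑_n ∑_{i<s} G(sn+i,0)` has the partial sums `∑_{m<sN} G(m,0)` of the original series.
-/

open Finset Filter Topology

theorem Finset.sum_range_mul_eq_sum_sum {M : Type*} [AddCommMonoid M] (f : ℕ → M) (s N : ℕ) :
    ∑ m ∈ range (s * N), f m = ∑ n ∈ range N, ∑ i ∈ range s, f (s * n + i) := by
  induction N with
  | zero => simp
  | succ N ih => rw [Nat.mul_succ, sum_range_add, ih, sum_range_succ]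

namespace IsWZPair

variable {M : Type*} [AddCommGroup M] {F G : ℕ → ℕ → M}

theorem sum_range_succ_sub_sum_range (h : IsWZPair F G) (n K : ℕ) :
    ∑ k ∈ range K, F (n + 1) k - ∑ k ∈ range K, F n k = G n K - G n 0 := by
  rw [← sum_sub_distrib]
  simp only [h n]
  exact sum_range_sub (G n) K

theorem sum_range_diagonal (h : IsWZPair F G) (N : ℕ) :
    ∑ n ∈ range N, (F (n + 1) n + G n n) =
      ∑ n ∈ range N, G n 0 + ∑ k ∈ range N, F N k := by
  induction N with
  | zero => simp
  | succ N ih =>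
    have step := sub_eq_iff_eq_add.mp (h.sum_range_succ_sub_sum_range N N)
    rw [sum_range_succ, ih, sum_range_succ, sum_range_succ (F (N + 1)), step]
    abel

theorem scale (h : IsWZPair F G) (s : ℕ) :
    IsWZPair (fun n k => F (s * n) k) (fun n k => ∑ i ∈ range s, G (s * n + i) k) := by
  intro n k
  show F (s * (n + 1)) k - F (s * n) k = _
  rw [Nat.mul_succ, ← sum_sub_distrib]
  simpa only [add_zero, ← add_assoc, h _ k] using
    (sum_range_sub (fun i => F (s * n + i) k) s).symm

theorem tendsto_sum_range_diagonal [TopologicalSpace M] [ContinuousAdd M] (h : IsWZPair F G)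
    {S L : M} (hS : Tendsto (fun N => ∑ n ∈ range N, G n 0) atTop (𝓝 S))
    (hL : Tendsto (fun N => ∑ k ∈ range N, F N k) atTop (𝓝 L)) :
    Tendsto (fun N => ∑ n ∈ range N, (F (n + 1) n + G n n)) atTop (𝓝 (S + L)) := by
  simpa only [h.sum_range_diagonal] using hS.add hL

end IsWZPair

theorem wz_formula_one (F G : ℕ → ℕ → ℝ)
    (hWZ : ∀ n k, F (n + 1) k - F n k = G n (k + 1) - G n k)
    (s : ℕ) (hs : 1 ≤ s) (S₁ S₂ L : ℝ)
    (h₁ : HasSum (fun n : ℕ => G n 0) S₁)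
    (h₂ : HasSum (fun n : ℕ =>
      F (s * (n + 1)) n + ∑ i ∈ Finset.range s, G (s * n + i) n) S₂)
    (hL : Filter.Tendsto (fun n : ℕ => ∑ k ∈ Finset.range n, F (s * n) k)
      Filter.atTop (nhds L)) :
    S₁ = S₂ - L := by
  have hsN : Tendsto (fun N : ℕ => s * N) atTop atTop :=
    tendsto_id.const_mul_atTop' (by omega)
  have hS₁ :
      Tendsto (fun N => ∑ n ∈ range N, ∑ i ∈ range s, G (s * n + i) 0) atTop (𝓝 S₁) := by
    simpa only [Function.comp_def, sum_range_mul_eq_sum_sum] using h₁.tendsto_sum_nat.comp hsN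
  have hS₂ := (IsWZPair.scale hWZ s).tendsto_sum_range_diagonal hS₁ hL
  rw [tendsto_nhds_unique h₂.tendsto_sum_nat hS₂]
  abel
end

section
/- For every n ≥ 1, the absolute value of the term a_n = (n!)^10 (205n² + 250n + 77) / (64 ((2n+1)!)^5) satisfies a_{n+1}/a_n ≤ 1/512, hence the partial sums of Σ (-1)^n a_n approximate the limit with error at most a_{N} at stage N. -/
/-!
Since `(2n+3)! = (2n+3)(2n+2)(2n+1)!` and `(2n+2)^5 = 32 (n+1)^5`, the ratio of consecutive terms
is `(n+1)^5 q(n+1) / (32 (2n+3)^5 q(n))` with `q(x) = 205x² + 250x + 77`, and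
`(2x+3)^5 q(x) - 16 (x+1)^5 q(x+1)` is a polynomial with nonnegative coefficients. So the terms
decrease at least geometrically with ratio `1/512`; the series is then summable and the
alternating series error bound applies.
-/

open Nat

def zeta3Quadratic (x : ℝ) : ℝ := 205 * x ^ 2 + 250 * x + 77

noncomputable def zeta3Term (n : ℕ) : ℝ :=
  (n ! : ℝ) ^ 10 * zeta3Quadratic n / (64 * ((2 * n + 1)! : ℝ) ^ 5)

lemma zeta3Quadratic_pos {x : ℝ} (hx : 0 ≤ x) : 0 < zeta3Quadratic x := by
  unfold zeta3Quadratic; positivity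

lemma zeta3Term_pos (n : ℕ) : 0 < zeta3Term n := by
  unfold zeta3Term
  have := zeta3Quadratic_pos n.cast_nonneg
  positivity

lemma zeta3Term_succ_div (n : ℕ) :
    zeta3Term (n + 1) / zeta3Term n =
      ((n : ℝ) + 1) ^ 5 * zeta3Quadratic (n + 1) /
        (32 * (2 * (n : ℝ) + 3) ^ 5 * zeta3Quadratic n) := by
  have hq := zeta3Quadratic_pos n.cast_nonneg
  have hfac : ((2 * (n + 1) + 1)! : ℝ) = (2 * n + 3) * ((2 * n + 2) * ((2 * n + 1)! : ℝ)) := by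
    rw [show 2 * (n + 1) + 1 = 2 * n + 1 + 1 + 1 by ring, factorial_succ, factorial_succ]
    push_cast; ring
  unfold zeta3Term
  rw [hfac, factorial_succ]
  push_cast
  field_simp
  ring

lemma sixteen_mul_zeta3Quadratic_succ_le {x : ℝ} (hx : 0 ≤ x) :
    16 * ((x + 1) ^ 5 * zeta3Quadratic (x + 1)) ≤ (2 * x + 3) ^ 5 * zeta3Quadratic x := by
  unfold zeta3Quadratic
  rw [← sub_nonneg]
  ring_nf
  positivity

lemma zeta3Term_succ_div_le (n : ℕ) : zeta3Term (n + 1) / zeta3Term n ≤ 1 / 512 := by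
  have hq := zeta3Quadratic_pos n.cast_nonneg
  rw [zeta3Term_succ_div, div_le_div_iff₀ (by positivity) (by norm_num)]
  linarith [sixteen_mul_zeta3Quadratic_succ_le n.cast_nonneg]

lemma zeta3Term_succ_le (n : ℕ) : zeta3Term (n + 1) ≤ 1 / 512 * zeta3Term n := by
  have := zeta3Term_succ_div_le n
  rwa [div_le_iff₀ (zeta3Term_pos n)] at this

lemma zeta3Term_antitone : Antitone zeta3Term :=
  antitone_nat_of_succ_le fun n ↦ by
    linarith [zeta3Term_succ_le n, zeta3Term_pos n]

lemma zeta3Term_summable : Summable zeta3Term :=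
  summable_of_ratio_norm_eventually_le (r := 1 / 512) (by norm_num) <| .of_forall fun n ↦ by
    simpa only [Real.norm_of_nonneg (zeta3Term_pos _).le] using zeta3Term_succ_le n

theorem zeta3_series_ratio_and_error
    (a : ℕ → ℝ)
    (ha : ∀ n : ℕ, a n = (Nat.factorial n : ℝ) ^ 10 *
      (205 * (n : ℝ) ^ 2 + 250 * (n : ℝ) + 77) /
      (64 * (Nat.factorial (2 * n + 1) : ℝ) ^ 5)) :
    (∀ n : ℕ, 1 ≤ n → a (n + 1) / a n ≤ 1 / 512) ∧
    (∀ N : ℕ, 1 ≤ N →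
      |(∑' n : ℕ, (-1 : ℝ) ^ n * a n) - ∑ n ∈ Finset.range N, (-1 : ℝ) ^ n * a n|
        ≤ a N) := by
  obtain rfl : a = zeta3Term := funext ha
  exact ⟨fun n _ ↦ zeta3Term_succ_div_le n, fun N _ ↦
    alternating_series_error_bound _ zeta3Term_antitone zeta3Term_summable N⟩
end

section
/- ζ(3) = (5/2) · Σ_{n=1}^∞ (-1)^{n-1} / (n³ · binomial(2n, n)). -/
/-!
Van der Poorten's telescoping proof, in Wilf–Zeilberger form. The pair
`F n k = (-1)^k k!² (n-k)! / (2 k³ (n+k)!)`, `G n k = (-1)^(k+1) k!² (n-k-1)! / (n² (n+k)!)`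
satisfies `F (n+1) k - F n k = G (n+1) k - G (n+1) (k-1)` for `1 ≤ k ≤ n`. Summing over `k`, the
remainder `R N = ∑_{k=1}^N F N k` changes by `R (n+1) - R n = 1/(n+1)³ - (5/2) aₙ`, where `aₙ` is
the `n`-th term of the binomial series and both summands come from boundary terms. So `R N` is the
`N`-th partial sum of `∑ (1/(n+1)³ - (5/2) aₙ)`, and `R N → 0` because
`k!² (N-k)! / (N+k)! = 1 / (C(N+k,k) C(N,k)) ≤ 1/(N+1)` for `1 ≤ k ≤ N`.
-/

open Finset Filter Nat Topology

noncomputable section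

namespace Zeta3

def wzF (n k : ℕ) : ℝ :=
  (-1) ^ k * (k ! : ℝ) ^ 2 * (n - k)! / (2 * k ^ 3 * (n + k)!)

def wzG (n k : ℕ) : ℝ :=
  (-1) ^ (k + 1) * (k ! : ℝ) ^ 2 * (n - k - 1)! / (n ^ 2 * (n + k)!)

def remainder (N : ℕ) : ℝ := ∑ k ∈ range N, wzF N (k + 1)

theorem wzF_succ_sub_wzF {n k : ℕ} (hk : k < n) :
    wzF (n + 1) (k + 1) - wzF n (k + 1) = wzG (n + 1) (k + 1) - wzG (n + 1) k := by
  obtain ⟨j, rfl⟩ := Nat.exists_eq_add_of_lt hk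
  have e1 : k + j + 1 + 1 - (k + 1) = j + 1 := by omega
  have e2 : k + j + 1 - (k + 1) = j := by omega
  have e3 : k + j + 1 + 1 - k - 1 = j + 1 := by omega
  have e4 : k + j + 1 + 1 + (k + 1) = 2 * k + j + 2 + 1 := by omega
  have e5 : k + j + 1 + (k + 1) = 2 * k + j + 2 := by omega
  have e6 : k + j + 1 + 1 + k = 2 * k + j + 2 := by omega
  simp only [wzF, wzG, e1, e2, e3, e4, e5, e6, factorial_succ]
  push_cast
  field_simp
  ring

theorem wzG_succ_zero (n : ℕ) : wzG (n + 1) 0 = -(1 / ((n : ℝ) + 1) ^ 3) := by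
  simp only [wzG, Nat.sub_zero, Nat.add_sub_cancel, add_zero, factorial_succ n]
  push_cast
  field_simp
  ring

theorem wzF_diag_add_wzG (n : ℕ) :
    wzF (n + 1) (n + 1) + wzG (n + 1) n =
      -(5 / 2) * ((-1) ^ n / (((n : ℝ) + 1) ^ 3 * (2 * (n + 1)).choose (n + 1))) := by
  have e1 : n + 1 + (n + 1) = 2 * n + 1 + 1 := by omega
  have e2 : n + 1 + n = 2 * n + 1 := by omega
  rw [two_mul, Nat.cast_add_choose]
  simp only [wzF, wzG, Nat.sub_self, Nat.add_sub_cancel_left, e1, e2, factorial_succ,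
    factorial_zero]
  push_cast
  field_simp
  ring

theorem remainder_succ_sub (n : ℕ) :
    remainder (n + 1) - remainder n =
      1 / ((n : ℝ) + 1) ^ 3 -
        5 / 2 * ((-1) ^ n / (((n : ℝ) + 1) ^ 3 * (2 * (n + 1)).choose (n + 1))) := by
  have htelescope : ∑ k ∈ range n, (wzF (n + 1) (k + 1) - wzF n (k + 1)) =
      wzG (n + 1) n - wzG (n + 1) 0 := by
    rw [← sum_range_sub]
    exact sum_congr rfl fun k hk => wzF_succ_sub_wzF (mem_range.mp hk)
  rw [remainder, remainder, sum_range_succ, add_sub_right_comm, ← sum_sub_distrib, htelescope,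
    wzG_succ_zero]
  linarith [wzF_diag_add_wzG n]

theorem succ_mul_factorial_sq_mul_factorial_sub_le {N k : ℕ} (hk : 1 ≤ k) (hkN : k ≤ N) :
    (N + 1) * (k ! ^ 2 * (N - k)!) ≤ (N + k)! := by
  have hN : k ! * (N - k)! ≤ N ! := by
    rw [← choose_mul_factorial_mul_factorial hkN, mul_assoc]
    exact Nat.le_mul_of_pos_left _ (choose_pos hkN)
  have hchoose : N + 1 ≤ (N + k).choose k := by
    rw [← choose_symm_add, ← choose_succ_self_right N]
    exact choose_le_choose N (by omega)
  calc (N + 1) * (k ! ^ 2 * (N - k)!) = (N + 1) * k ! * (k ! * (N - k)!) := by ring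
    _ ≤ (N + k).choose k * k ! * N ! := by gcongr
    _ = (N + k)! := by rw [mul_right_comm, add_choose_mul_factorial_mul_factorial]

theorem abs_wzF_le {N k : ℕ} (hk : 1 ≤ k) (hkN : k ≤ N) :
    |wzF N k| ≤ 1 / (k : ℝ) ^ 3 / 2 * (1 / ((N : ℝ) + 1)) := by
  have hineq : ((N : ℝ) + 1) * ((k ! : ℝ) ^ 2 * (N - k)!) ≤ (N + k)! := by
    exact_mod_cast succ_mul_factorial_sq_mul_factorial_sub_le hk hkN
  have hk0 : (0 : ℝ) < k := by exact_mod_cast hk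
  rw [wzF, abs_div, abs_mul, abs_mul, abs_pow, abs_neg, abs_one, one_pow, one_mul,
    abs_of_nonneg (by positivity), abs_of_nonneg (by positivity), abs_of_pos (by positivity),
    div_le_iff₀ (by positivity)]
  field_simp
  linarith

theorem summable_one_div_succ_pow_three : Summable fun n : ℕ => 1 / ((n : ℝ) + 1) ^ 3 := by
  simpa using (summable_nat_add_iff 1).mpr (Real.summable_one_div_nat_pow.mpr (by norm_num))

theorem summable_neg_one_pow_div_succ_pow_three_mul_choose :
    Summable fun n : ℕ =>
      (-1 : ℝ) ^ n / (((n : ℝ) + 1) ^ 3 * (2 * (n + 1)).choose (n + 1)) := by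
  refine summable_one_div_succ_pow_three.of_norm_bounded fun n => ?_
  have hchoose : (1 : ℝ) ≤ (2 * (n + 1)).choose (n + 1) := by
    exact_mod_cast choose_pos (by omega)
  rw [norm_div, norm_pow, norm_neg, norm_one, one_pow, Real.norm_of_nonneg (by positivity)]
  exact one_div_le_one_div_of_le (by positivity) (le_mul_of_one_le_right (by positivity) hchoose)

theorem abs_remainder_le (N : ℕ) :
    |remainder N| ≤ (∑' n : ℕ, 1 / ((n : ℝ) + 1) ^ 3) / 2 * (1 / ((N : ℝ) + 1)) := by
  calc |remainder N| ≤ ∑ k ∈ range N, |wzF N (k + 1)| := abs_sum_le_sum_abs _ _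
    _ ≤ ∑ k ∈ range N, 1 / ((k : ℝ) + 1) ^ 3 / 2 * (1 / ((N : ℝ) + 1)) := by
      refine sum_le_sum fun k hk => ?_
      simpa using abs_wzF_le (by omega) (mem_range.mp hk)
    _ = (∑ k ∈ range N, 1 / ((k : ℝ) + 1) ^ 3) / 2 * (1 / ((N : ℝ) + 1)) := by
      rw [sum_div, sum_mul]
    _ ≤ _ := by
      gcongr
      exact summable_one_div_succ_pow_three.sum_le_tsum _ fun _ _ => by positivity

theorem tendsto_remainder : Tendsto remainder atTop (𝓝 0) := by
  have h := tendsto_one_div_add_atTop_nhds_zero_nat.const_mul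
    ((∑' n : ℕ, 1 / ((n : ℝ) + 1) ^ 3) / 2)
  rw [mul_zero] at h
  exact squeeze_zero_norm abs_remainder_le h

end Zeta3

end

open Zeta3 in
theorem zeta3_central_binomial :
    (∑' n : ℕ, (1 : ℝ) / ((n : ℝ) + 1) ^ 3) =
      (5 / 2) * ∑' n : ℕ, (-1 : ℝ) ^ n /
        (((n : ℝ) + 1) ^ 3 * (Nat.choose (2 * (n + 1)) (n + 1) : ℝ)) := by
  have hf := summable_one_div_succ_pow_three
  have hg := summable_neg_one_pow_div_succ_pow_three_mul_choose
  have hdiff : HasSum (fun n : ℕ => 1 / ((n : ℝ) + 1) ^ 3 -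
      5 / 2 * ((-1) ^ n / (((n : ℝ) + 1) ^ 3 * (2 * (n + 1)).choose (n + 1)))) 0 := by
    rw [(hf.sub (hg.mul_left _)).hasSum_iff_tendsto_nat]
    simp_rw [← remainder_succ_sub, sum_range_sub, remainder, range_zero, sum_empty, sub_zero]
    exact tendsto_remainder
  linarith [(hf.hasSum.sub (hg.hasSum.mul_left (5 / 2))).unique hdiff]
end

section
/- Suppose F, G, H : ℕ³ → ℝ are such that ω = F δk + G δn + H δa is a closed discrete 1-form in the three variables (n,k,a), i.e. each pair of components satisfies the corresponding mixed-difference equation. Then for integers s,t,r ≥ 1, the form ω_{s,t,r} with components F_{s,t,r}(n,k,a) = Σ_{j=0}^{t-1} F(sn, tk+j, ra), G_{s,t,r}(n,k,a) = Σ_{i=0}^{s-1} G(sn+i, tk, ra), H_{s,t,r}(n,k,a) = Σ_{u=0}^{r-1} H(sn, tk, ra+u) is also closed. -/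
theorem closed_form_3d_dilation (F G H : ℕ → ℕ → ℕ → ℝ)
    (h₁ : ∀ n k a, F (n + 1) k a - F n k a = G n (k + 1) a - G n k a)
    (h₂ : ∀ n k a, F n k (a + 1) - F n k a = H n (k + 1) a - H n k a)
    (h₃ : ∀ n k a, G n k (a + 1) - G n k a = H (n + 1) k a - H n k a)
    (s t r : ℕ) (hs : 1 ≤ s) (ht : 1 ≤ t) (hr : 1 ≤ r) :
    let Fs : ℕ → ℕ → ℕ → ℝ := fun n k a =>
      ∑ j ∈ Finset.range t, F (s * n) (t * k + j) (r * a)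
    let Gs : ℕ → ℕ → ℕ → ℝ := fun n k a =>
      ∑ i ∈ Finset.range s, G (s * n + i) (t * k) (r * a)
    let Hs : ℕ → ℕ → ℕ → ℝ := fun n k a =>
      ∑ u ∈ Finset.range r, H (s * n) (t * k) (r * a + u)
    (∀ n k a, Fs (n + 1) k a - Fs n k a = Gs n (k + 1) a - Gs n k a) ∧
    (∀ n k a, Fs n k (a + 1) - Fs n k a = Hs n (k + 1) a - Hs n k a) ∧
    (∀ n k a, Gs n k (a + 1) - Gs n k a = Hs (n + 1) k a - Hs n k a) := by
  intro Fs Gs Hs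
  have keyF : ∀ n k a m, F (n + m) k a - F n k a
      = ∑ i ∈ Finset.range m, (G (n + i) (k + 1) a - G (n + i) k a) := by
    intro n k a m
    induction m with
    | zero => simp
    | succ m ih =>
      rw [Finset.sum_range_succ, ← ih, ← h₁, Nat.add_succ]; ring
  have keyFa : ∀ n k a m, F n k (a + m) - F n k a
      = ∑ u ∈ Finset.range m, (H n (k + 1) (a + u) - H n k (a + u)) := by
    intro n k a m
    induction m with
    | zero => simp
    | succ m ih =>
      rw [Finset.sum_range_succ, ← ih, ← h₂, Nat.add_succ]; ring
  have keyG : ∀ n k a m, G n k (a + m) - G n k a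
      = ∑ u ∈ Finset.range m, (H (n + 1) k (a + u) - H n k (a + u)) := by
    intro n k a m
    induction m with
    | zero => simp
    | succ m ih =>
      rw [Finset.sum_range_succ, ← ih, ← h₃, Nat.add_succ]; ring
  refine ⟨?_, ?_, ?_⟩
  · intro n k a
    show (∑ j ∈ Finset.range t, F (s * (n + 1)) (t * k + j) (r * a))
        - (∑ j ∈ Finset.range t, F (s * n) (t * k + j) (r * a))
      = (∑ i ∈ Finset.range s, G (s * n + i) (t * (k + 1)) (r * a))
        - (∑ i ∈ Finset.range s, G (s * n + i) (t * k) (r * a))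
    rw [show s * (n + 1) = s * n + s from by ring,
        show t * (k + 1) = t * k + t from by ring,
        ← Finset.sum_sub_distrib, ← Finset.sum_sub_distrib]
    calc ∑ j ∈ Finset.range t, (F (s * n + s) (t * k + j) (r * a) - F (s * n) (t * k + j) (r * a))
        = ∑ j ∈ Finset.range t, ∑ i ∈ Finset.range s,
            (G (s * n + i) (t * k + j + 1) (r * a) - G (s * n + i) (t * k + j) (r * a)) :=
          Finset.sum_congr rfl fun j _ => keyF _ _ _ _
      _ = ∑ i ∈ Finset.range s, ∑ j ∈ Finset.range t,
            (G (s * n + i) (t * k + j + 1) (r * a) - G (s * n + i) (t * k + j) (r * a)) :=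
          Finset.sum_comm
      _ = ∑ i ∈ Finset.range s, (G (s * n + i) (t * k + t) (r * a) - G (s * n + i) (t * k) (r * a)) := by
          refine Finset.sum_congr rfl fun i _ => ?_
          simpa [add_assoc] using Finset.sum_range_sub (fun j => G (s * n + i) (t * k + j) (r * a)) t
  · intro n k a
    show (∑ j ∈ Finset.range t, F (s * n) (t * k + j) (r * (a + 1)))
        - (∑ j ∈ Finset.range t, F (s * n) (t * k + j) (r * a))
      = (∑ u ∈ Finset.range r, H (s * n) (t * (k + 1)) (r * a + u))
        - (∑ u ∈ Finset.range r, H (s * n) (t * k) (r * a + u))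
    rw [show r * (a + 1) = r * a + r from by ring,
        show t * (k + 1) = t * k + t from by ring,
        ← Finset.sum_sub_distrib, ← Finset.sum_sub_distrib]
    calc ∑ j ∈ Finset.range t, (F (s * n) (t * k + j) (r * a + r) - F (s * n) (t * k + j) (r * a))
        = ∑ j ∈ Finset.range t, ∑ u ∈ Finset.range r,
            (H (s * n) (t * k + j + 1) (r * a + u) - H (s * n) (t * k + j) (r * a + u)) :=
          Finset.sum_congr rfl fun j _ => keyFa _ _ _ _
      _ = ∑ u ∈ Finset.range r, ∑ j ∈ Finset.range t,
            (H (s * n) (t * k + j + 1) (r * a + u) - H (s * n) (t * k + j) (r * a + u)) :=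
          Finset.sum_comm
      _ = ∑ u ∈ Finset.range r, (H (s * n) (t * k + t) (r * a + u) - H (s * n) (t * k) (r * a + u)) := by
          refine Finset.sum_congr rfl fun u _ => ?_
          simpa [add_assoc] using Finset.sum_range_sub (fun j => H (s * n) (t * k + j) (r * a + u)) t
  · intro n k a
    show (∑ i ∈ Finset.range s, G (s * n + i) (t * k) (r * (a + 1)))
        - (∑ i ∈ Finset.range s, G (s * n + i) (t * k) (r * a))
      = (∑ u ∈ Finset.range r, H (s * (n + 1)) (t * k) (r * a + u))
        - (∑ u ∈ Finset.range r, H (s * n) (t * k) (r * a + u))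
    rw [show r * (a + 1) = r * a + r from by ring,
        show s * (n + 1) = s * n + s from by ring,
        ← Finset.sum_sub_distrib, ← Finset.sum_sub_distrib]
    calc ∑ i ∈ Finset.range s, (G (s * n + i) (t * k) (r * a + r) - G (s * n + i) (t * k) (r * a))
        = ∑ i ∈ Finset.range s, ∑ u ∈ Finset.range r,
            (H (s * n + i + 1) (t * k) (r * a + u) - H (s * n + i) (t * k) (r * a + u)) :=
          Finset.sum_congr rfl fun i _ => keyG _ _ _ _
      _ = ∑ u ∈ Finset.range r, ∑ i ∈ Finset.range s,
            (H (s * n + i + 1) (t * k) (r * a + u) - H (s * n + i) (t * k) (r * a + u)) :=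
          Finset.sum_comm
      _ = ∑ u ∈ Finset.range r, (H (s * n + s) (t * k) (r * a + u) - H (s * n) (t * k) (r * a + u)) := by
          refine Finset.sum_congr rfl fun u _ => ?_
          simpa [add_assoc] using Finset.sum_range_sub (fun i => H (s * n + i) (t * k) (r * a + u)) s
end
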